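/- arXiv:1602.02646 — 2 statements merged into one kernel-verified Lean document; each statement's English description precedes it below -/
import Mathlib

section
/- Let A be a real symmetric n×n matrix and B a real symmetric n×n matrix, and suppose A - B and A + B are both positive definite. Then every eigenvalue of F₁ = [[A, B], [-B, -A]] is real and nonzero. -/
/-!
Write an eigenvector as `(x, y)` and put `u = x + y`, `w = x - y`. The eigen-equation becomes
`(A + B) u = μ w` and `(A - B) w = μ u`, so `μ²` is an eigenvalue of `(A - B)(A + B)` (or of
`(A + B)(A - B)` when `u = 0`). Pairing `(A - B)(A + B) u = μ² u` with `(A + B) u` writes `μ²`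
as a quotient of two positive quadratic forms, so `μ² > 0`, i.e. `μ` is real and nonzero.
-/

open Matrix
open scoped ComplexOrder

lemma Matrix.re_star_dotProduct_map_ofReal_mulVec {n : Type*} [Fintype n]
    (M : Matrix n n ℝ) (z : n → ℂ) :
    (star z ⬝ᵥ M.map Complex.ofReal *ᵥ z).re =
      (fun i ↦ (z i).re) ⬝ᵥ M *ᵥ (fun i ↦ (z i).re) +
        (fun i ↦ (z i).im) ⬝ᵥ M *ᵥ (fun i ↦ (z i).im) := by
  simp only [dotProduct, mulVec, Finset.mul_sum, Complex.re_sum, ← Finset.sum_add_distrib]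
  refine Finset.sum_congr rfl fun i _ ↦ Finset.sum_congr rfl fun j _ ↦ ?_
  simp [Complex.mul_re]

theorem Matrix.PosDef.map_ofReal {n : Type*} [Fintype n] {M : Matrix n n ℝ} (hM : M.PosDef) :
    (M.map Complex.ofReal).PosDef := by
  have hH : (M.map Complex.ofReal).IsHermitian :=
    hM.isHermitian.map _ fun _ ↦ (Complex.conj_ofReal _).symm
  refine .of_dotProduct_mulVec_pos hH fun z hz ↦
    Complex.pos_iff.mpr ⟨?_, (hH.im_star_dotProduct_mulVec_self z).symm⟩
  rw [re_star_dotProduct_map_ofReal_mulVec]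
  have hreim : (fun i ↦ (z i).re) ≠ 0 ∨ (fun i ↦ (z i).im) ≠ 0 := by
    contrapose! hz
    exact funext fun i ↦ Complex.ext (congrFun hz.1 i) (congrFun hz.2 i)
  have hform := hM.posSemidef.dotProduct_mulVec_nonneg
  rcases hreim with h | h
  · exact add_pos_of_pos_of_nonneg (by simpa using hM.dotProduct_mulVec_pos h)
      (by simpa using hform _)
  · exact add_pos_of_nonneg_of_pos (by simpa using hform _)
      (by simpa using hM.dotProduct_mulVec_pos h)

lemma Complex.im_eq_zero_and_ne_zero_of_mul_self_pos {μ : ℂ} (h : 0 < μ * μ) :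
    μ.im = 0 ∧ μ ≠ 0 := by
  obtain ⟨hre, him⟩ := Complex.pos_iff.mp h
  simp only [Complex.mul_re, Complex.mul_im] at hre him
  refine ⟨?_, by rintro rfl; simp at h⟩
  rcases mul_eq_zero.mp (show μ.re * μ.im = 0 by linarith) with h0 | h0
  · rw [h0] at hre; nlinarith [sq_nonneg μ.im]
  · exact h0

theorem Matrix.PosDef.pos_of_mulVec_mulVec_eq_smul {𝕜 n : Type*} [RCLike 𝕜] [Fintype n]
    {P Q : Matrix n n 𝕜} (hP : P.PosDef) (hQ : Q.PosDef) {u : n → 𝕜} (hu : u ≠ 0) {c : 𝕜}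
    (h : Q *ᵥ P *ᵥ u = c • u) : 0 < c := by
  have hPform := hP.dotProduct_mulVec_pos hu
  have hPu : P *ᵥ u ≠ 0 := fun h0 ↦ hPform.ne' (by rw [h0, dotProduct_zero])
  have hQform := hQ.dotProduct_mulVec_pos hPu
  rw [h, dotProduct_smul, star_mulVec, hP.isHermitian.eq, ← dotProduct_mulVec, smul_eq_mul]
    at hQform
  exact (pos_iff_pos_of_mul_pos hQform).mpr hPform

lemma Matrix.fromBlocks_mulVec_eq_smul {R n : Type*} [CommRing R] [Fintype n]
    {A B : Matrix n n R} {x y : n → R} {μ : R}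
    (h : fromBlocks A B (-B) (-A) *ᵥ Sum.elim x y = μ • Sum.elim x y) :
    (A + B) *ᵥ (x + y) = μ • (x - y) ∧ (A - B) *ᵥ (x - y) = μ • (x + y) := by
  rw [fromBlocks_mulVec] at h
  have h₁ : A *ᵥ x + B *ᵥ y = μ • x := funext fun i ↦ by simpa using congrFun h (.inl i)
  have h₂ : -B *ᵥ x + -A *ᵥ y = μ • y := funext fun i ↦ by simpa using congrFun h (.inr i)
  constructor
  · rw [smul_sub, ← h₁, ← h₂, add_mulVec, mulVec_add, mulVec_add, neg_mulVec, neg_mulVec]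
    abel
  · rw [smul_add, ← h₁, ← h₂, sub_mulVec, mulVec_sub, mulVec_sub, neg_mulVec, neg_mulVec]
    abel

theorem bse_real_nonzero_spectrum_general {n : ℕ} (A B : Matrix (Fin n) (Fin n) ℝ)
    (hAmB : (A - B).PosDef) (hApB : (A + B).PosDef) :
    ∀ μ : ℂ, (∃ v : (Fin n ⊕ Fin n) → ℂ, v ≠ 0 ∧
        (fromBlocks A B (-B) (-A)).map (Complex.ofReal) *ᵥ v = μ • v) →
      μ.im = 0 ∧ μ ≠ 0 := by
  rintro μ ⟨v, hv, hμ⟩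
  obtain ⟨x, y, rfl⟩ : ∃ x y, v = Sum.elim x y := ⟨_, _, (Sum.elim_comp_inl_inr v).symm⟩
  rw [fromBlocks_map, Matrix.map_neg _ Complex.ofReal_neg, Matrix.map_neg _ Complex.ofReal_neg]
    at hμ
  obtain ⟨hPu, hQw⟩ := fromBlocks_mulVec_eq_smul hμ
  rw [← Matrix.map_add _ Complex.ofReal_add] at hPu
  rw [← Matrix.map_sub _ Complex.ofReal_sub] at hQw
  have hP := hApB.map_ofReal
  have hQ := hAmB.map_ofReal
  suffices 0 < μ * μ from Complex.im_eq_zero_and_ne_zero_of_mul_self_pos this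
  by_cases hu : x + y = 0
  · have hw : x - y ≠ 0 := by
      intro hw
      have hx : x = (2⁻¹ : ℂ) • ((x + y) + (x - y)) := by module
      have hy : y = (2⁻¹ : ℂ) • ((x + y) - (x - y)) := by module
      rw [hu, hw] at hx hy
      exact hv (by simp [hx, hy])
    exact hQ.pos_of_mulVec_mulVec_eq_smul hP hw (by rw [hQw, mulVec_smul, hPu, smul_smul])
  · exact hP.pos_of_mulVec_mulVec_eq_smul hQ hu (by rw [hPu, mulVec_smul, hQw, smul_smul])

/-- Real spectrum of the linear-response (BSE/RPA) matrix: if `A, B` are real symmetric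
and `A - B`, `A + B` are positive definite, then every complex eigenvalue of
`F₁ = [[A, B], [-B, -A]]` is real and nonzero. -/
theorem bse_real_nonzero_spectrum {n : ℕ} (A B : Matrix (Fin n) (Fin n) ℝ)
    (hA : Aᵀ = A) (hB : Bᵀ = B)
    (hAmB : (A - B).PosDef) (hApB : (A + B).PosDef) :
    ∀ μ : ℂ, (∃ v : (Fin n ⊕ Fin n) → ℂ, v ≠ 0 ∧
        (fromBlocks A B (-B) (-A)).map (Complex.ofReal) *ᵥ v = μ • v) →
      μ.im = 0 ∧ μ ≠ 0 :=
  bse_real_nonzero_spectrum_general A B hAmB hApB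
end

section
/- Let A = D + P Qᵀ and B = Φ Ψᵀ with D an invertible n×n diagonal matrix and P, Q ∈ ℝ^{n×k}, Φ, Ψ ∈ ℝ^{n×m}. Then the Schur complement S = -Aᵀ + Bᵀ A⁻¹ B can be written as S = -(D + Q_S P_Sᵀ) where P_S = [P Ψ] ∈ ℝ^{n×(k+m)} and Q_S = [Q Ψ(Φᵀ D⁻¹ P K Qᵀ D⁻¹ Φ - Φᵀ D⁻¹ Φ)] with K = (I + Qᵀ D⁻¹ P)⁻¹, assuming I + Qᵀ D⁻¹ P is invertible. -/
/-!
The Sherman–Morrison–Woodbury formula gives `A⁻¹ = D⁻¹ - D⁻¹ P K Qᵀ D⁻¹`, so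
`Bᵀ A⁻¹ B = Ψ (Φᵀ A⁻¹ Φ) Ψᵀ` is a rank-`m` update flanked by `Ψ`, while `Aᵀ = D + Q Pᵀ` since `D`
is symmetric. Both updates merge into one block product, `[Q X] [P Ψ]ᵀ = Q Pᵀ + X Ψᵀ`.
-/

namespace Matrix

variable {α : Type*} [CommRing α] {l m n : Type*} [Fintype m] [Fintype n]

theorem inv_add_mul_eq_sub [DecidableEq l] [Fintype l] [DecidableEq n]
    {A : Matrix l l α} (U : Matrix l n α) (V : Matrix n l α)
    (hA : IsUnit A) (hAUV : IsUnit (1 + V * A⁻¹ * U)) :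
    (A + U * V)⁻¹ = A⁻¹ - A⁻¹ * U * (1 + V * A⁻¹ * U)⁻¹ * V * A⁻¹ := by
  simpa only [Matrix.mul_one, inv_one] using
    add_mul_mul_inv_eq_sub A U 1 V hA isUnit_one (by rwa [inv_one])

theorem fromCols_mul_transpose_fromCols (A C : Matrix l m α) (B E : Matrix l n α) :
    fromCols A B * (fromCols C E)ᵀ = A * Cᵀ + B * Eᵀ := by
  rw [transpose_fromCols, fromCols_mul_fromRows]

end Matrix

open Matrix

/-- Diagonal-plus-low-rank structure of the BSE Schur complement:
with `A = D + PQᵀ`, `B = ΦΨᵀ`, `D` invertible diagonal and `K = (I + Qᵀ D⁻¹ P)⁻¹`,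
the Schur complement `S = -Aᵀ + Bᵀ A⁻¹ B` equals `-(D + Q_S P_Sᵀ)` where
`P_S = [P Ψ]` and `Q_S = [Q  Ψ(Φᵀ D⁻¹ P K Qᵀ D⁻¹ Φ - Φᵀ D⁻¹ Φ)]`. -/
theorem bse_schur_low_rank {n k m : ℕ}
    (D : Matrix (Fin n) (Fin n) ℝ)
    (P Q : Matrix (Fin n) (Fin k) ℝ) (Φ Ψ : Matrix (Fin n) (Fin m) ℝ)
    (hD : D.IsDiag) (hDinv : IsUnit D.det)
    (hK : IsUnit (1 + Qᵀ * D⁻¹ * P).det) :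
    -(D + P * Qᵀ)ᵀ + (Φ * Ψᵀ)ᵀ * (D + P * Qᵀ)⁻¹ * (Φ * Ψᵀ)
      = -(D +
          fromCols Q
            (Ψ * (Φᵀ * D⁻¹ * P * (1 + Qᵀ * D⁻¹ * P)⁻¹ * Qᵀ * D⁻¹ * Φ - Φᵀ * D⁻¹ * Φ)) *
          (fromCols P Ψ)ᵀ) := by
  set X := D⁻¹ * P * (1 + Qᵀ * D⁻¹ * P)⁻¹ * Qᵀ * D⁻¹
  have hA_inv : (D + P * Qᵀ)⁻¹ = D⁻¹ - X :=
    inv_add_mul_eq_sub P Qᵀ ((isUnit_iff_isUnit_det D).mpr hDinv)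
      ((isUnit_iff_isUnit_det _).mpr hK)
  have hA_transpose : (D + P * Qᵀ)ᵀ = D + Q * Pᵀ := by
    rw [transpose_add, hD.isSymm.eq, transpose_mul, transpose_transpose]
  have hBAB : (Φ * Ψᵀ)ᵀ * (D⁻¹ - X) * (Φ * Ψᵀ)
      = -(Ψ * (Φᵀ * D⁻¹ * P * (1 + Qᵀ * D⁻¹ * P)⁻¹ * Qᵀ * D⁻¹ * Φ - Φᵀ * D⁻¹ * Φ) * Ψᵀ) := by
    simp only [X, transpose_mul, transpose_transpose, Matrix.mul_assoc, Matrix.mul_sub,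
      Matrix.sub_mul, neg_sub]
  rw [hA_inv, hA_transpose, hBAB, fromCols_mul_transpose_fromCols]
  abel
end
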